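/- arXiv:2605.14082 — 7 statements merged into one kernel-verified Lean document; each statement's English description precedes it below -/
import Mathlib

section
/- Let A ∈ ℝ^{n×n} be dissipative, i.e., A + A^T ≤ 0 (negative semi-definite), partitioned into blocks A11 ∈ ℝ^{r×r}, A12 ∈ ℝ^{r×(n-r)}, A21, A22 with A22 invertible. Then the Schur complement S := -(A11 - A12 A22^{-1} A21) has positive semi-definite symmetric part, i.e., (1/2)(S + S^T) ≥ 0. -/
open Matrix

/-- The Schur complement operator S of a dissipative block matrix has
positive semi-definite symmetric part. -/
theorem schur_complement_symm_part_posSemidef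
    {r s : ℕ}
    (A11 : Matrix (Fin r) (Fin r) ℝ) (A12 : Matrix (Fin r) (Fin s) ℝ)
    (A21 : Matrix (Fin s) (Fin r) ℝ) (A22 : Matrix (Fin s) (Fin s) ℝ)
    (hdiss : (-(Matrix.fromBlocks A11 A12 A21 A22 +
        (Matrix.fromBlocks A11 A12 A21 A22)ᵀ)).PosSemidef)
    (hA22 : IsUnit A22) :
    (((1/2 : ℝ)) • (-(A11 - A12 * A22⁻¹ * A21) + (-(A11 - A12 * A22⁻¹ * A21))ᵀ)).PosSemidef := by
  set S : Matrix (Fin r) (Fin r) ℝ := -(A11 - A12 * A22⁻¹ * A21) with hS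
  refine posSemidef_iff_dotProduct_mulVec.mpr ⟨?_, ?_⟩
  · unfold Matrix.IsHermitian
    ext i j
    simp only [conjTranspose_apply, star_trivial, Matrix.smul_apply, Matrix.add_apply,
      Matrix.transpose_apply, smul_eq_mul]
    ring
  · intro x
    have star_x : star x = x := by ext i; simp
    rw [star_x]
    -- quadratic form of symmetric part equals that of S
    have key : x ⬝ᵥ (((1/2 : ℝ)) • (S + Sᵀ)) *ᵥ x = x ⬝ᵥ S *ᵥ x := by
      have hT : x ⬝ᵥ Sᵀ *ᵥ x = x ⬝ᵥ S *ᵥ x := by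
        rw [dotProduct_mulVec, vecMul_transpose, dotProduct_comm]
      rw [smul_mulVec, dotProduct_smul, add_mulVec, dotProduct_add, hT, smul_eq_mul]
      ring
    rw [key]
    -- choose y so that A21 x + A22 y = 0
    set y : Fin s → ℝ := -(A22⁻¹ *ᵥ (A21 *ᵥ x)) with hy
    have hbot : A21 *ᵥ x + A22 *ᵥ y = 0 := by
      rw [hy, mulVec_neg, mulVec_mulVec, Matrix.mul_nonsing_inv _ ((Matrix.isUnit_iff_isUnit_det _).mp hA22), one_mulVec]
      simp
    have h := hdiss.dotProduct_mulVec_nonneg (Sum.elim x y)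
    have star_z : star (Sum.elim x y) = Sum.elim x y := by ext i; cases i <;> simp
    rw [star_z] at h
    set A : Matrix (Fin r ⊕ Fin s) (Fin r ⊕ Fin s) ℝ := Matrix.fromBlocks A11 A12 A21 A22 with hA
    have hAz : A *ᵥ Sum.elim x y = Sum.elim ((-S) *ᵥ x) 0 := by
      rw [hA, fromBlocks_mulVec]
      simp only [Sum.elim_comp_inl, Sum.elim_comp_inr]
      rw [hbot]
      rw [hS]
      simp only [neg_neg, sub_mulVec, hy, mulVec_neg, mulVec_mulVec, Matrix.mul_assoc]
      abel
    have hzAz : Sum.elim x y ⬝ᵥ A *ᵥ Sum.elim x y = x ⬝ᵥ (-S) *ᵥ x := by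
      rw [hAz, sumElim_dotProduct_sumElim, dotProduct_zero, add_zero]
    have hzATz : Sum.elim x y ⬝ᵥ Aᵀ *ᵥ Sum.elim x y = x ⬝ᵥ (-S) *ᵥ x := by
      rw [dotProduct_mulVec, vecMul_transpose, dotProduct_comm, hzAz]
    rw [neg_mulVec, dotProduct_neg, add_mulVec, dotProduct_add, hzAz, hzATz] at h
    simp only [neg_mulVec, dotProduct_neg] at h ⊢
    linarith
end

section
/- Let E11 ∈ ℝ^{r×r} be symmetric positive definite, S ∈ ℝ^{r×r} with symmetric part S̃ satisfying S̃ ≥ α I for some α > 0. Let k_i > 0, x^0 = x_{1,0} ∈ ℝ^r, F_i ∈ ℝ^r, and define x^i for i = 1,…,N by (E11 + k_i S) x^i = E11 x^{i-1} + k_i F_i. Then (1/2)‖x^N‖²_{E11} + (1/2)∑_{i=1}^{N-1}‖x^{i+1} - x^i‖²_{E11} + (α/2)∑_{i=1}^N k_i ‖x^i‖² ≤ (1/2)‖x_{1,0}‖²_{E11} + (1/(2α))∑_{i=1}^N k_i ‖F_i‖². -/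
open Matrix Finset

lemma dG0_key
    {r : ℕ} (E11 S : Matrix (Fin r) (Fin r) ℝ)
    (hE : E11.PosDef)
    (α : ℝ) (hα : 0 < α)
    (hS : ∀ v : Fin r → ℝ, α * (v ⬝ᵥ v) ≤ v ⬝ᵥ S.mulVec v)
    (k : ℕ → ℝ) (hk : ∀ i, 0 < k i)
    (x : ℕ → Fin r → ℝ) (F : ℕ → Fin r → ℝ) :
    ∀ N : ℕ, (∀ i ∈ Finset.Icc 1 N,
      (E11 + k i • S).mulVec (x i) = E11.mulVec (x (i - 1)) + k i • F i) →
    (1/2 : ℝ) * (x N ⬝ᵥ E11.mulVec (x N))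
      + (1/2 : ℝ) * ∑ i ∈ Finset.Icc 1 N,
          ((x i - x (i - 1)) ⬝ᵥ E11.mulVec (x i - x (i - 1)))
      + (α / 2) * ∑ i ∈ Finset.Icc 1 N, k i * (x i ⬝ᵥ x i)
    ≤ (1/2 : ℝ) * (x 0 ⬝ᵥ E11.mulVec (x 0))
      + (1 / (2 * α)) * ∑ i ∈ Finset.Icc 1 N, k i * (F i ⬝ᵥ F i) := by
  have hsym : ∀ a b : Fin r → ℝ, b ⬝ᵥ E11.mulVec a = a ⬝ᵥ E11.mulVec b := by
    have hs : E11ᵀ = E11 := by simpa using hE.isHermitian.eq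
    intro a b
    rw [dotProduct_mulVec, ← mulVec_transpose, hs, dotProduct_comm]
  intro N
  induction N with
  | zero => intro _; simp
  | succ n ih =>
    intro hrec
    have ihh := ih (fun i hi => hrec i (Finset.Icc_subset_Icc_right (Nat.le_succ n) hi))
    have h1 : (1:ℕ) ≤ n + 1 := Nat.le_add_left 1 n
    rw [Finset.sum_Icc_succ_top h1, Finset.sum_Icc_succ_top h1, Finset.sum_Icc_succ_top h1]
    simp only [Nat.add_sub_cancel]
    set a := x n with ha
    set b := x (n + 1) with hb
    have hr := hrec (n + 1) (Finset.mem_Icc.mpr ⟨h1, le_refl _⟩)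
    simp only [Nat.add_sub_cancel] at hr
    have hdot : b ⬝ᵥ (E11 + k (n+1) • S).mulVec b
        = b ⬝ᵥ (E11.mulVec a + k (n+1) • F (n+1)) := by rw [hr]
    have hexp : b ⬝ᵥ E11.mulVec b + k (n+1) * (b ⬝ᵥ S.mulVec b)
        = b ⬝ᵥ E11.mulVec a + k (n+1) * (b ⬝ᵥ F (n+1)) := by
      simpa [add_mulVec, smul_mulVec, dotProduct_add, dotProduct_smul,
        smul_eq_mul] using hdot
    have hjump : (b - a) ⬝ᵥ E11.mulVec (b - a)
        = b ⬝ᵥ E11.mulVec b - 2 * (b ⬝ᵥ E11.mulVec a) + a ⬝ᵥ E11.mulVec a := by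
      simp [mulVec_sub, dotProduct_sub, sub_dotProduct]
      ring_nf
      linarith [hsym a b]
    have hSb := hS b
    have hamgm : (0:ℝ) ≤ (α • b - F (n+1)) ⬝ᵥ (α • b - F (n+1)) :=
      Finset.sum_nonneg (fun i _ => mul_self_nonneg _)
    have hamgm' : 2 * α * (b ⬝ᵥ F (n+1)) ≤ α^2 * (b ⬝ᵥ b) + F (n+1) ⬝ᵥ F (n+1) := by
      have heq : (α • b - F (n+1)) ⬝ᵥ (α • b - F (n+1))
          = α^2 * (b ⬝ᵥ b) - 2 * α * (b ⬝ᵥ F (n+1)) + F (n+1) ⬝ᵥ F (n+1) := by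
        simp [dotProduct_sub, sub_dotProduct, dotProduct_smul, smul_dotProduct,
          smul_eq_mul, dotProduct_comm (F (n+1)) b]
        ring
      linarith [heq ▸ hamgm]
    have hkpos := hk (n+1)
    have hbF : b ⬝ᵥ F (n+1) ≤ (α/2) * (b ⬝ᵥ b) + (1/(2*α)) * (F (n+1) ⬝ᵥ F (n+1)) := by
      rw [show (α/2) * (b ⬝ᵥ b) + (1/(2*α)) * (F (n+1) ⬝ᵥ F (n+1))
          = (α^2 * (b ⬝ᵥ b) + F (n+1) ⬝ᵥ F (n+1)) / (2*α) from by field_simp,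
        le_div_iff₀ (by positivity)]
      nlinarith [hamgm']
    have hstep : (1/2 : ℝ) * (b ⬝ᵥ E11.mulVec b)
        + (1/2 : ℝ) * ((b - a) ⬝ᵥ E11.mulVec (b - a))
        + (α / 2) * (k (n+1) * (b ⬝ᵥ b))
        ≤ (1/2 : ℝ) * (a ⬝ᵥ E11.mulVec a)
        + (1 / (2 * α)) * (k (n+1) * (F (n+1) ⬝ᵥ F (n+1))) := by
      rw [hjump]
      have hbF' : k (n+1) * (b ⬝ᵥ F (n+1)) ≤ k (n+1) * ((α/2) * (b ⬝ᵥ b)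
          + (1/(2*α)) * (F (n+1) ⬝ᵥ F (n+1))) :=
        mul_le_mul_of_nonneg_left hbF hkpos.le
      have hSb' : k (n+1) * (α * (b ⬝ᵥ b)) ≤ k (n+1) * (b ⬝ᵥ S.mulVec b) :=
        mul_le_mul_of_nonneg_left (hS b) hkpos.le
      nlinarith [hexp]
    linarith [ihh, hstep]

/-- Unconditional stability of the dG(0) (implicit Euler) primal scheme. -/
theorem primal_dG0_stability
    {r : ℕ} (E11 S : Matrix (Fin r) (Fin r) ℝ)
    (hE : E11.PosDef)
    (α : ℝ) (hα : 0 < α)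
    (hS : ∀ v : Fin r → ℝ, α * (v ⬝ᵥ v) ≤ v ⬝ᵥ S.mulVec v)
    (N : ℕ) (k : ℕ → ℝ) (hk : ∀ i, 0 < k i)
    (x : ℕ → Fin r → ℝ) (F : ℕ → Fin r → ℝ)
    (hrec : ∀ i ∈ Finset.Icc 1 N,
      (E11 + k i • S).mulVec (x i) = E11.mulVec (x (i - 1)) + k i • F i) :
    (1/2 : ℝ) * (x N ⬝ᵥ E11.mulVec (x N))
      + (1/2 : ℝ) * ∑ i ∈ Finset.Icc 1 (N - 1),
          ((x (i + 1) - x i) ⬝ᵥ E11.mulVec (x (i + 1) - x i))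
      + (α / 2) * ∑ i ∈ Finset.Icc 1 N, k i * (x i ⬝ᵥ x i)
    ≤ (1/2 : ℝ) * (x 0 ⬝ᵥ E11.mulVec (x 0))
      + (1 / (2 * α)) * ∑ i ∈ Finset.Icc 1 N, k i * (F i ⬝ᵥ F i) := by
  have key := dG0_key E11 S hE α hα hS k hk x F N hrec
  have hQnn : ∀ v : Fin r → ℝ, 0 ≤ v ⬝ᵥ E11.mulVec v := by
    intro v; have := hE.posSemidef.dotProduct_mulVec_nonneg v; simpa using this
  -- reindex the jump sum
  have hjumps : ∑ i ∈ Finset.Icc 1 (N - 1),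
        ((x (i + 1) - x i) ⬝ᵥ E11.mulVec (x (i + 1) - x i))
      ≤ ∑ i ∈ Finset.Icc 1 N,
        ((x i - x (i - 1)) ⬝ᵥ E11.mulVec (x i - x (i - 1))) := by
    rcases Nat.eq_zero_or_pos N with h0 | hpos
    · subst h0; simp
    · have hmap : (Finset.Icc 1 (N - 1)).map (addRightEmbedding 1)
          = Finset.Icc 2 N := by
        rw [Finset.map_add_right_Icc]
        congr 1
        omega
      have hre : ∑ i ∈ Finset.Icc 1 (N - 1),
            ((x (i + 1) - x i) ⬝ᵥ E11.mulVec (x (i + 1) - x i))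
          = ∑ j ∈ Finset.Icc 2 N,
            ((x j - x (j - 1)) ⬝ᵥ E11.mulVec (x j - x (j - 1))) := by
        rw [← hmap, Finset.sum_map]
        apply Finset.sum_congr rfl
        intro i _
        simp [addRightEmbedding]
      rw [hre]
      apply Finset.sum_le_sum_of_subset_of_nonneg
      · exact Finset.Icc_subset_Icc_left (by omega)
      · intro i _ _; exact hQnn _
  linarith
end

section
/- Let E11 ∈ ℝ^{r×r} be symmetric positive definite, S ∈ ℝ^{r×r} with x^T S x ≥ α‖x‖² for all x, α > 0. Let k_i > 0, R_i ∈ ℝ^r, and define z^N := 0 and backwards for i = N-1,…,1: (E11 + k_i S^T) z^i = E11 z^{i+1} + R_i. Then (1/2)‖z^1‖²_{E11} + (1/2)∑_{i=1}^{N-1}‖z^{i+1} - z^i‖²_{E11} + (α/2)∑_{i=1}^{N-1} k_i ‖z^i‖² ≤ (1/(2α))∑_{i=1}^{N-1} ‖R_i‖²/k_i. -/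
open Matrix Finset

private lemma dot_self_nonneg' {r : ℕ} (v : Fin r → ℝ) : 0 ≤ v ⬝ᵥ v :=
  Finset.sum_nonneg fun i _ => mul_self_nonneg _

private lemma young' {r : ℕ} (v w : Fin r → ℝ) {c : ℝ} (hc : 0 < c) :
    v ⬝ᵥ w ≤ c/2 * (v ⬝ᵥ v) + 1/(2*c) * (w ⬝ᵥ w) := by
  have h := dot_self_nonneg' (c • v - w)
  have h1 : (c • v - w) ⬝ᵥ (c • v - w)
      = c^2 * (v ⬝ᵥ v) - 2*c*(v ⬝ᵥ w) + w ⬝ᵥ w := by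
    simp [sub_dotProduct, dotProduct_sub, smul_dotProduct, dotProduct_smul,
      dotProduct_comm w v]
    ring
  rw [h1] at h
  rw [← sub_nonneg]
  have hc' : c ≠ 0 := ne_of_gt hc
  have key : c/2 * (v ⬝ᵥ v) + 1/(2*c) * (w ⬝ᵥ w) - v ⬝ᵥ w
      = (c^2 * (v ⬝ᵥ v) - 2*c*(v ⬝ᵥ w) + w ⬝ᵥ w)/(2*c) := by
    field_simp
    ring
  rw [key]
  exact div_nonneg h (by positivity)

/-- Stability of the discrete adjoint backward recursion. -/
theorem adjoint_dG0_stability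
    {r : ℕ} (E11 S : Matrix (Fin r) (Fin r) ℝ)
    (hE : E11.PosDef)
    (α : ℝ) (hα : 0 < α)
    (hS : ∀ v : Fin r → ℝ, α * (v ⬝ᵥ v) ≤ v ⬝ᵥ S.mulVec v)
    (N : ℕ) (hN : 1 ≤ N) (k : ℕ → ℝ) (hk : ∀ i, 0 < k i)
    (z : ℕ → Fin r → ℝ) (R : ℕ → Fin r → ℝ)
    (hzN : z N = 0)
    (hrec : ∀ i ∈ Finset.Icc 1 (N - 1),
      (E11 + k i • Sᵀ).mulVec (z i) = E11.mulVec (z (i + 1)) + R i) :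
    (1/2 : ℝ) * (z 1 ⬝ᵥ E11.mulVec (z 1))
      + (1/2 : ℝ) * ∑ i ∈ Finset.Icc 1 (N - 1),
          ((z (i + 1) - z i) ⬝ᵥ E11.mulVec (z (i + 1) - z i))
      + (α / 2) * ∑ i ∈ Finset.Icc 1 (N - 1), k i * (z i ⬝ᵥ z i)
    ≤ (1 / (2 * α)) * ∑ i ∈ Finset.Icc 1 (N - 1), (R i ⬝ᵥ R i) / k i := by
  have hEsym : E11ᵀ = E11 := by
    have := hE.1
    simpa [Matrix.IsHermitian] using this
  have hsym : ∀ u v : Fin r → ℝ, u ⬝ᵥ E11.mulVec v = v ⬝ᵥ E11.mulVec u := by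
    intro u v
    rw [Matrix.dotProduct_mulVec, ← Matrix.mulVec_transpose, hEsym,
      dotProduct_comm]
  set F : ℕ → ℝ := fun i => z i ⬝ᵥ E11.mulVec (z i) with hF
  set D : ℕ → ℝ := fun i => (z (i+1) - z i) ⬝ᵥ E11.mulVec (z (i+1) - z i) with hD
  -- per-step estimate
  have step : ∀ i ∈ Finset.Icc 1 (N - 1),
      (1/2)*F i - (1/2)*F (i+1) + (1/2)*D i + (α/2)*(k i * (z i ⬝ᵥ z i))
        ≤ (1/(2*α)) * ((R i ⬝ᵥ R i) / k i) := by
    intro i hi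
    have h1 : z i ⬝ᵥ ((E11 + k i • Sᵀ).mulVec (z i))
        = z i ⬝ᵥ (E11.mulVec (z (i+1)) + R i) := by rw [hrec i hi]
    have h2 : z i ⬝ᵥ ((E11 + k i • Sᵀ).mulVec (z i))
        = F i + k i * (z i ⬝ᵥ Sᵀ.mulVec (z i)) := by
      rw [Matrix.add_mulVec, dotProduct_add, Matrix.smul_mulVec,
        dotProduct_smul]
      simp [hF, smul_eq_mul]
    have h3 : z i ⬝ᵥ (E11.mulVec (z (i+1)) + R i)
        = z i ⬝ᵥ E11.mulVec (z (i+1)) + z i ⬝ᵥ R i := dotProduct_add _ _ _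
    have hcross : z i ⬝ᵥ E11.mulVec (z (i+1))
        = (F i + F (i+1) - D i) / 2 := by
      have hDexp : D i = F (i+1) - 2 * (z i ⬝ᵥ E11.mulVec (z (i+1))) + F i := by
        simp only [hD, hF, Matrix.mulVec_sub, sub_dotProduct, dotProduct_sub]
        rw [hsym (z (i+1)) (z i)]
        ring
      linarith
    have hcoer : α * (z i ⬝ᵥ z i) ≤ z i ⬝ᵥ Sᵀ.mulVec (z i) := by
      have : z i ⬝ᵥ Sᵀ.mulVec (z i) = z i ⬝ᵥ S.mulVec (z i) := by
        rw [Matrix.dotProduct_mulVec, ← Matrix.mulVec_transpose,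
          Matrix.transpose_transpose, dotProduct_comm]
      rw [this]
      exact hS (z i)
    have hki := hk i
    have hyoung : z i ⬝ᵥ R i
        ≤ (α * k i)/2 * (z i ⬝ᵥ z i) + 1/(2*(α * k i)) * (R i ⬝ᵥ R i) :=
      young' _ _ (by positivity)
    have hcoer' : k i * (α * (z i ⬝ᵥ z i)) ≤ k i * (z i ⬝ᵥ Sᵀ.mulVec (z i)) :=
      mul_le_mul_of_nonneg_left hcoer (le_of_lt hki)
    have hconv : 1/(2*(α * k i)) * (R i ⬝ᵥ R i)
        = (1/(2*α)) * ((R i ⬝ᵥ R i) / k i) := by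
      rw [one_div_mul_eq_div, one_div_mul_eq_div, div_div]
      congr 1
      ring
    rw [h2, h3, hcross] at h1
    rw [hconv] at hyoung
    linarith
  have hsum := Finset.sum_le_sum step
  have htel : ∑ i ∈ Finset.Icc 1 (N - 1), ((1/2)*F i - (1/2)*F (i+1))
      = (1/2) * F 1 := by
    have hIcc : Finset.Icc 1 (N-1) = Finset.Ico 1 N := by
      rw [← Finset.Ico_add_one_right_eq_Icc]
      congr 1
      omega
    rw [hIcc, Finset.sum_Ico_eq_sum_range]
    have h := Finset.sum_range_sub' (fun j => (1/2 : ℝ)*F (1+j)) (N - 1)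
    rw [show (1 : ℕ) + (N-1) = N from by omega] at h
    rw [show F N = 0 from by simp [hF, hzN]] at h
    simpa [add_assoc] using h
  have hsplit : ∑ i ∈ Finset.Icc 1 (N - 1),
      ((1/2)*F i - (1/2)*F (i+1) + (1/2)*D i + (α/2)*(k i * (z i ⬝ᵥ z i)))
      = (1/2)*F 1 + (1/2) * (∑ i ∈ Finset.Icc 1 (N - 1), D i)
        + (α/2) * ∑ i ∈ Finset.Icc 1 (N - 1), k i * (z i ⬝ᵥ z i) := by
    rw [Finset.sum_add_distrib, Finset.sum_add_distrib, htel,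
      ← Finset.mul_sum, ← Finset.mul_sum]
  rw [hsplit, ← Finset.mul_sum] at hsum
  exact hsum
end

section
/- Let E11 ∈ ℝ^{r×r} be symmetric positive definite, S ∈ ℝ^{r×r} with symmetric part S̃ := (1/2)(S+S^T) ≥ α I for some α > 0, and k > 0. Then the matrix Γ := (E11 + k S^T)^{-1} E11 is a strict contraction in the E11-norm: for every v ≠ 0, ‖Γ v‖_{E11} < ‖v‖_{E11}. -/
open Matrix

/-- The Jacobi amplification matrix Γ = (E11 + k Sᵀ)⁻¹ E11 is a strict
contraction in the E11-norm. -/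
theorem amplification_matrix_strict_contraction
    {r : ℕ} (E11 S : Matrix (Fin r) (Fin r) ℝ)
    (hE : E11.PosDef)
    (α : ℝ) (hα : 0 < α)
    (hS : ∀ v : Fin r → ℝ, α * (v ⬝ᵥ v) ≤ v ⬝ᵥ (((1/2 : ℝ)) • (S + Sᵀ)).mulVec v)
    (k : ℝ) (hk : 0 < k) :
    ∀ v : Fin r → ℝ, v ≠ 0 →
      (((E11 + k • Sᵀ)⁻¹ * E11).mulVec v) ⬝ᵥ
          E11.mulVec (((E11 + k • Sᵀ)⁻¹ * E11).mulVec v)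
        < v ⬝ᵥ E11.mulVec v := by
  intro v hv
  have hEsym : E11ᵀ = E11 := by
    have := hE.1
    simpa [Matrix.IsHermitian, Matrix.conjTranspose_eq_transpose_of_trivial] using this
  have hEpos : ∀ x : Fin r → ℝ, x ≠ 0 → 0 < x ⬝ᵥ E11.mulVec x := by
    intro x hx
    simpa using hE.dotProduct_mulVec_pos hx
  have hEpsd : ∀ x : Fin r → ℝ, 0 ≤ x ⬝ᵥ E11.mulVec x := by
    intro x
    simpa using hE.posSemidef.dotProduct_mulVec_nonneg x
  -- rewrite the coercivity hypothesis in terms of Sᵀ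
  have hSq : ∀ x : Fin r → ℝ, α * (x ⬝ᵥ x) ≤ x ⬝ᵥ Sᵀ.mulVec x := by
    intro x
    have h := hS x
    have hsym : x ⬝ᵥ S.mulVec x = x ⬝ᵥ Sᵀ.mulVec x := by
      rw [Matrix.dotProduct_mulVec x Sᵀ, Matrix.vecMul_transpose, dotProduct_comm]
    rw [Matrix.smul_mulVec, dotProduct_smul, Matrix.add_mulVec,
      dotProduct_add, hsym, smul_eq_mul] at h
    linarith
  set M := E11 + k • Sᵀ with hM
  have hMquad : ∀ x : Fin r → ℝ, x ≠ 0 → 0 < x ⬝ᵥ M.mulVec x := by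
    intro x hx
    have h1 := hEpos x hx
    have h2 := hSq x
    have h3 : (0:ℝ) ≤ x ⬝ᵥ x := Finset.sum_nonneg fun i _ => mul_self_nonneg _
    have : 0 < x ⬝ᵥ E11.mulVec x + k * (x ⬝ᵥ Sᵀ.mulVec x) := by
      nlinarith [mul_le_mul_of_nonneg_left h2 hk.le, mul_nonneg (mul_nonneg hk.le hα.le) h3]
    simpa [hM, Matrix.add_mulVec, Matrix.smul_mulVec, dotProduct_add,
      dotProduct_smul] using this
  have hMdet : IsUnit M.det := by
    rw [isUnit_iff_ne_zero]
    intro h0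
    obtain ⟨x, hx0, hxM⟩ := (Matrix.exists_mulVec_eq_zero_iff).2 h0
    have h1 := hMquad x hx0
    rw [hxM] at h1
    simp at h1
  have hMr : M * M⁻¹ = 1 := Matrix.mul_nonsing_inv M hMdet
  set w := (M⁻¹ * E11).mulVec v with hw
  have hMw : M.mulVec w = E11.mulVec v := by
    rw [hw, ← Matrix.mulVec_mulVec, Matrix.mulVec_mulVec, hMr, Matrix.one_mulVec]
  have hw0 : w ≠ 0 := by
    intro h
    rw [h, Matrix.mulVec_zero] at hMw
    have := hEpos v hv
    rw [← hMw] at this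
    simp at this
  set d := v - w with hd
  have hEd : E11.mulVec d = k • Sᵀ.mulVec w := by
    have : E11.mulVec v = E11.mulVec w + k • Sᵀ.mulVec w := by
      rw [← hMw, hM, Matrix.add_mulVec, Matrix.smul_mulVec]
    rw [hd, Matrix.mulVec_sub, this]
    abel
  have hvwd : v = w + d := by rw [hd]; abel
  have hsymE : ∀ x y : Fin r → ℝ, x ⬝ᵥ E11.mulVec y = y ⬝ᵥ E11.mulVec x := by
    intro x y
    rw [Matrix.dotProduct_mulVec, ← Matrix.mulVec_transpose, hEsym, dotProduct_comm]
  have hexpand : v ⬝ᵥ E11.mulVec v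
      = w ⬝ᵥ E11.mulVec w + 2 * (w ⬝ᵥ E11.mulVec d) + d ⬝ᵥ E11.mulVec d := by
    rw [hvwd]
    rw [Matrix.mulVec_add, add_dotProduct, dotProduct_add,
      dotProduct_add]
    have := hsymE d w
    ring_nf
    linarith [hsymE d w]
  have hwEd : w ⬝ᵥ E11.mulVec d = k * (w ⬝ᵥ Sᵀ.mulVec w) := by
    rw [hEd, dotProduct_smul, smul_eq_mul]
  have hww : 0 < w ⬝ᵥ w := by
    have h3 : (0:ℝ) ≤ w ⬝ᵥ w := Finset.sum_nonneg fun i _ => mul_self_nonneg _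
    rcases h3.lt_or_eq with h | h
    · exact h
    · exfalso
      apply hw0
      funext i
      have := Finset.sum_eq_zero_iff_of_nonneg (fun j _ => mul_self_nonneg (w j)) |>.1 h.symm
      have hi := this i (Finset.mem_univ i)
      simpa [mul_self_eq_zero] using hi
  have hpos : 0 < w ⬝ᵥ E11.mulVec d := by
    rw [hwEd]
    have h4 := hSq w
    have h5 : 0 < w ⬝ᵥ Sᵀ.mulVec w := lt_of_lt_of_le (mul_pos hα hww) h4
    exact mul_pos hk h5
  have := hEpsd d
  calc w ⬝ᵥ E11.mulVec w < w ⬝ᵥ E11.mulVec w + 2 * (w ⬝ᵥ E11.mulVec d) + d ⬝ᵥ E11.mulVec d := by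
        linarith
    _ = v ⬝ᵥ E11.mulVec v := hexpand.symm
end

section
/- Under the assumptions of the previous statement (E11 symmetric positive definite, S̃ = (1/2)(S+S^T) ≥ α I with α > 0, k > 0), with w := (E11 + k S^T)^{-1} E11 v, the exact identity ‖v‖²_{E11} = ‖w‖²_{E11} + 2k ⟨S̃ w, w⟩ + ‖v - w‖²_{E11} holds for all v ∈ ℝ^r. -/
open Matrix

lemma dot_swap {r : ℕ} (A : Matrix (Fin r) (Fin r) ℝ) (x y : Fin r → ℝ) :
    x ⬝ᵥ Aᵀ.mulVec y = (A.mulVec x) ⬝ᵥ y := by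
  rw [Matrix.dotProduct_mulVec, Matrix.vecMul_transpose]

/-- Exact identity ‖v‖²_{E11} = ‖w‖²_{E11} + 2k⟨S̃ w, w⟩ + ‖v-w‖²_{E11}
for w = (E11 + k Sᵀ)⁻¹ E11 v. -/
theorem amplification_energy_identity
    {r : ℕ} (E11 S : Matrix (Fin r) (Fin r) ℝ)
    (hE : E11.PosDef)
    (α : ℝ) (hα : 0 < α)
    (hS : ∀ v : Fin r → ℝ, α * (v ⬝ᵥ v) ≤ v ⬝ᵥ (((1/2 : ℝ)) • (S + Sᵀ)).mulVec v)
    (k : ℝ) (hk : 0 < k) :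
    ∀ v : Fin r → ℝ,
      (fun w => v ⬝ᵥ E11.mulVec v
          = w ⬝ᵥ E11.mulVec w
            + 2 * k * (w ⬝ᵥ (((1/2 : ℝ)) • (S + Sᵀ)).mulVec w)
            + (v - w) ⬝ᵥ E11.mulVec (v - w))
        (((E11 + k • Sᵀ)⁻¹ * E11).mulVec v) := by
  intro v
  set M : Matrix (Fin r) (Fin r) ℝ := E11 + k • Sᵀ with hM
  -- symmetry of E11
  have hsym : E11ᵀ = E11 := hE.1.eq
  -- x ⬝ Sᵀ x = x ⬝ S̃ x
  have htilde : ∀ x : Fin r → ℝ,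
      x ⬝ᵥ Sᵀ.mulVec x = x ⬝ᵥ (((1/2 : ℝ)) • (S + Sᵀ)).mulVec x := by
    intro x
    have h1 : x ⬝ᵥ Sᵀ.mulVec x = x ⬝ᵥ S.mulVec x := by
      rw [dot_swap, dotProduct_comm]
    simp [Matrix.smul_mulVec, Matrix.add_mulVec, dotProduct_add, dotProduct_smul,
      smul_eq_mul, ← h1]
    ring
  -- M is invertible
  have hinj : Function.Injective M.mulVec := by
    intro x y hxy
    have hz : M.mulVec (x - y) = 0 := by
      rw [Matrix.mulVec_sub, hxy, sub_self]
    by_contra hne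
    have hxy0 : x - y ≠ 0 := sub_ne_zero.mpr fun h => hne (by rw [h])
    set z := x - y
    have hpos : 0 < z ⬝ᵥ M.mulVec z := by
      have h1 : 0 < z ⬝ᵥ E11.mulVec z := by simpa using hE.dotProduct_mulVec_pos hxy0
      have h2 : 0 ≤ z ⬝ᵥ (k • Sᵀ).mulVec z := by
        rw [Matrix.smul_mulVec, dotProduct_smul, smul_eq_mul, htilde]
        have := hS z
        have hzz : 0 ≤ z ⬝ᵥ z := Finset.sum_nonneg fun i _ => mul_self_nonneg (z i)
        exact mul_nonneg hk.le (le_trans (mul_nonneg hα.le hzz) this)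
      have : M.mulVec z = E11.mulVec z + (k • Sᵀ).mulVec z := by
        rw [hM, Matrix.add_mulVec]
      rw [this, dotProduct_add]
      linarith
    rw [hz, dotProduct_zero] at hpos
    exact lt_irrefl 0 hpos
  have hunit : IsUnit M := mulVec_injective_iff_isUnit.mp hinj
  set w : Fin r → ℝ := ((E11 + k • Sᵀ)⁻¹ * E11).mulVec v with hw
  -- M w = E11 v
  have hMw : M.mulVec w = E11.mulVec v := by
    rw [hw, ← hM, ← Matrix.mulVec_mulVec, Matrix.mulVec_mulVec,
      Matrix.mul_nonsing_inv _ (hunit.map (Matrix.detMonoidHom)), Matrix.one_mulVec]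
  -- E11 (v - w) = k Sᵀ w
  have hkey : E11.mulVec (v - w) = (k • Sᵀ).mulVec w := by
    have : M.mulVec w = E11.mulVec w + (k • Sᵀ).mulVec w := by
      rw [hM, Matrix.add_mulVec]
    rw [Matrix.mulVec_sub]
    rw [← hMw, this]
    abel
  show v ⬝ᵥ E11.mulVec v
      = w ⬝ᵥ E11.mulVec w + 2 * k * (w ⬝ᵥ (((1/2 : ℝ)) • (S + Sᵀ)).mulVec w)
        + (v - w) ⬝ᵥ E11.mulVec (v - w)
  have hcross : w ⬝ᵥ E11.mulVec (v - w) = k * (w ⬝ᵥ (((1/2 : ℝ)) • (S + Sᵀ)).mulVec w) := by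
    rw [hkey, Matrix.smul_mulVec, dotProduct_smul, smul_eq_mul, htilde]
  have hcross' : (v - w) ⬝ᵥ E11.mulVec w = k * (w ⬝ᵥ (((1/2 : ℝ)) • (S + Sᵀ)).mulVec w) := by
    have : (v - w) ⬝ᵥ E11.mulVec w = w ⬝ᵥ E11.mulVec (v - w) := by
      conv_lhs => rw [← hsym]
      rw [dot_swap, dotProduct_comm]
    rw [this, hcross]
  have hv : v = w + (v - w) := by abel
  calc v ⬝ᵥ E11.mulVec v
      = (w + (v - w)) ⬝ᵥ E11.mulVec (w + (v - w)) := by rw [← hv]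
    _ = w ⬝ᵥ E11.mulVec w + w ⬝ᵥ E11.mulVec (v - w) + (v - w) ⬝ᵥ E11.mulVec w
        + (v - w) ⬝ᵥ E11.mulVec (v - w) := by
        rw [Matrix.mulVec_add, add_dotProduct, dotProduct_add, dotProduct_add]
        ring
    _ = _ := by rw [hcross, hcross']; ring
end

section
/- Let E11 ∈ ℝ^{r×r} be symmetric positive definite and S ∈ ℝ^{r×r} with symmetric part S̃ ≥ 0, and let μ_min := λ_min(S̃, E11) > 0 be the smallest generalized eigenvalue of the pair (S̃, E11), i.e., ⟨S̃ v, v⟩ ≥ μ_min ⟨E11 v, v⟩ for all v. Then every (possibly complex) eigenvalue λ of Γ := (E11 + k S^T)^{-1} E11 with k > 0 satisfies |λ| ≤ 1/(1 + k μ_min). -/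
open Matrix

lemma re_quad {r : ℕ} (M : Matrix (Fin r) (Fin r) ℝ) (v : Fin r → ℂ) :
    (star v ⬝ᵥ (M.map Complex.ofReal).mulVec v).re
      = (fun i => (v i).re) ⬝ᵥ M.mulVec (fun i => (v i).re)
        + (fun i => (v i).im) ⬝ᵥ M.mulVec (fun i => (v i).im) := by
  simp only [dotProduct, mulVec, Pi.star_apply, Matrix.map_apply, Finset.mul_sum,
    Complex.re_sum, ← Finset.sum_add_distrib]
  refine Finset.sum_congr rfl fun j _ => ?_
  refine Finset.sum_congr rfl fun l _ => ?_
  simp [Complex.mul_re, Complex.mul_im]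

lemma conj_quad {r : ℕ} (M : Matrix (Fin r) (Fin r) ℝ) (v : Fin r → ℂ) :
    (starRingEnd ℂ) (star v ⬝ᵥ (M.map Complex.ofReal).mulVec v)
      = star v ⬝ᵥ (Mᵀ.map Complex.ofReal).mulVec v := by
  simp only [dotProduct, mulVec, Pi.star_apply, Matrix.map_apply, Finset.mul_sum,
    map_sum, transpose_apply]
  rw [Finset.sum_comm]
  refine Finset.sum_congr rfl fun j _ => Finset.sum_congr rfl fun l _ => ?_
  simp [mul_comm, mul_left_comm, mul_assoc]

lemma sym_part_quad {r : ℕ} (S : Matrix (Fin r) (Fin r) ℝ) (x : Fin r → ℝ) :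
    x ⬝ᵥ (((1/2 : ℝ)) • (S + Sᵀ)).mulVec x = x ⬝ᵥ Sᵀ.mulVec x := by
  have h1 : x ⬝ᵥ S.mulVec x = x ⬝ᵥ Sᵀ.mulVec x := by
    rw [dotProduct_mulVec, ← vecMul_transpose, dotProduct_comm, transpose_transpose]
  rw [smul_mulVec, add_mulVec, dotProduct_smul, dotProduct_add, h1, smul_eq_mul]
  ring

lemma mapC_mul {r : ℕ} (M N : Matrix (Fin r) (Fin r) ℝ) :
    (M * N).map Complex.ofReal = M.map Complex.ofReal * N.map Complex.ofReal := by
  ext i j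
  simp [Matrix.mul_apply, Matrix.map_apply]

/-- Spectral radius bound |λ| ≤ 1/(1 + k μ_min) for eigenvalues of the
Jacobi amplification matrix Γ = (E11 + k Sᵀ)⁻¹ E11. -/
theorem amplification_spectral_radius_bound
    {r : ℕ} (E11 S : Matrix (Fin r) (Fin r) ℝ)
    (hE : E11.PosDef)
    (hS : (((1/2 : ℝ)) • (S + Sᵀ)).PosSemidef)
    (μmin : ℝ) (hμpos : 0 < μmin)
    (hμ : ∀ v : Fin r → ℝ,
      μmin * (v ⬝ᵥ E11.mulVec v) ≤ v ⬝ᵥ (((1/2 : ℝ)) • (S + Sᵀ)).mulVec v)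
    (k : ℝ) (hk : 0 < k) :
    ∀ (lam : ℂ) (v : Fin r → ℂ), v ≠ 0 →
      (((E11 + k • Sᵀ)⁻¹ * E11).map (Complex.ofReal)).mulVec v = lam • v →
      ‖lam‖ ≤ 1 / (1 + k * μmin) := by
  intro lam v hv hev
  set A : Matrix (Fin r) (Fin r) ℝ := E11 + k • Sᵀ with hA
  have hApos : ∀ w : Fin r → ℝ, w ≠ 0 → 0 < w ⬝ᵥ A.mulVec w := by
    intro w hw
    have h1 : 0 < w ⬝ᵥ E11.mulVec w := hE.dotProduct_mulVec_pos hw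
    have h2 : 0 ≤ w ⬝ᵥ Sᵀ.mulVec w := by
      rw [← sym_part_quad]; exact hS.dotProduct_mulVec_nonneg w
    rw [hA, add_mulVec, dotProduct_add, smul_mulVec, dotProduct_smul]
    have := mul_nonneg hk.le h2
    simp only [smul_eq_mul]; linarith
  have hdet : IsUnit A.det := by
    rw [← Matrix.isUnit_iff_isUnit_det, ← Matrix.mulVec_injective_iff_isUnit]
    intro w1 w2 h
    by_contra hne
    have hw : w1 - w2 ≠ 0 := sub_ne_zero.mpr hne
    have h0 : A.mulVec (w1 - w2) = 0 := by rw [mulVec_sub, h, sub_self]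
    have := hApos _ hw
    rw [h0, dotProduct_zero] at this
    exact lt_irrefl 0 this
  -- key equation over ℂ
  have hAE : A * (A⁻¹ * E11) = E11 := by
    rw [← Matrix.mul_assoc, Matrix.mul_nonsing_inv A hdet, Matrix.one_mul]
  have key : (E11.map Complex.ofReal).mulVec v = lam • (A.map Complex.ofReal).mulVec v := by
    calc (E11.map Complex.ofReal).mulVec v
        = ((A * (A⁻¹ * E11)).map Complex.ofReal).mulVec v := by rw [hAE]
      _ = (A.map Complex.ofReal * ((A⁻¹ * E11).map Complex.ofReal)).mulVec v := by
          rw [mapC_mul]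
      _ = (A.map Complex.ofReal).mulVec (((A⁻¹ * E11).map Complex.ofReal).mulVec v) := by
          rw [← mulVec_mulVec]
      _ = (A.map Complex.ofReal).mulVec (lam • v) := by rw [hev]
      _ = lam • (A.map Complex.ofReal).mulVec v := by rw [mulVec_smul]
  -- quadratic forms
  set x : Fin r → ℝ := fun i => (v i).re with hx
  set y : Fin r → ℝ := fun i => (v i).im with hy
  set e : ℂ := star v ⬝ᵥ (E11.map Complex.ofReal).mulVec v with he
  set a : ℂ := star v ⬝ᵥ (A.map Complex.ofReal).mulVec v with ha
  have hea : e = lam * a := by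
    rw [he, key, dotProduct_smul, smul_eq_mul, ha]
  -- e is real and positive
  have hxy : x ≠ 0 ∨ y ≠ 0 := by
    by_contra h
    push_neg at h
    apply hv
    funext i
    have h1 := congrFun h.1 i
    have h2 := congrFun h.2 i
    exact Complex.ext h1 h2
  have her : e.re = x ⬝ᵥ E11.mulVec x + y ⬝ᵥ E11.mulVec y := re_quad E11 v
  have hepos : 0 < e.re := by
    rw [her]
    rcases hxy with h | h
    · have h1 := hE.dotProduct_mulVec_pos h
      have h2 := hE.posSemidef.dotProduct_mulVec_nonneg y
      simp only [star_trivial] at h1 h2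
      linarith
    · have h1 := hE.dotProduct_mulVec_pos h
      have h2 := hE.posSemidef.dotProduct_mulVec_nonneg x
      simp only [star_trivial] at h1 h2
      linarith
  have hsym : E11ᵀ = E11 := by
    have h := hE.isHermitian.eq
    rwa [Matrix.conjTranspose_eq_transpose_of_trivial] at h
  have heim : e.im = 0 := by
    have h := conj_quad E11 v
    rw [hsym] at h
    have hce : (starRingEnd ℂ) e = e := by rw [he]; exact h
    have := congrArg Complex.im hce
    simp only [Complex.conj_im] at this
    linarith
  -- a.re bound
  have har : a.re = e.re + k * (x ⬝ᵥ Sᵀ.mulVec x + y ⬝ᵥ Sᵀ.mulVec y) := by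
    have h1 : a.re = x ⬝ᵥ A.mulVec x + y ⬝ᵥ A.mulVec y := re_quad A v
    rw [h1, her, hA]
    simp only [add_mulVec, dotProduct_add, smul_mulVec, dotProduct_smul, smul_eq_mul]
    ring
  have hSx : ∀ z : Fin r → ℝ, μmin * (z ⬝ᵥ E11.mulVec z) ≤ z ⬝ᵥ Sᵀ.mulVec z := by
    intro z
    rw [← sym_part_quad]; exact hμ z
  have hare : (1 + k * μmin) * e.re ≤ a.re := by
    rw [har, her]
    have h1 := hSx x
    have h2 := hSx y
    nlinarith [mul_le_mul_of_nonneg_left (add_le_add h1 h2) hk.le]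
  have hare_pos : 0 < a.re := by
    have : 0 < (1 + k * μmin) * e.re := by positivity
    linarith
  have hane : a ≠ 0 := fun h => by rw [h] at hare_pos; simp at hare_pos
  -- finish
  have habs : ‖lam‖ = ‖e‖ / ‖a‖ := by
    rw [hea, norm_mul, mul_div_assoc, div_self (by simpa using hane), mul_one]
  have habse : ‖e‖ = e.re := by
    have h2 : e = ((e.re : ℝ) : ℂ) := Complex.ext (by simp) (by simp [heim])
    conv_lhs => rw [h2]
    rw [Complex.norm_real, Real.norm_eq_abs, abs_of_pos hepos]
  have habsa : a.re ≤ ‖a‖ := Complex.re_le_norm a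
  rw [habs, habse]
  rw [div_le_div_iff₀ (lt_of_lt_of_le hare_pos habsa) (by positivity)]
  calc e.re * (1 + k * μmin) = (1 + k * μmin) * e.re := by ring
    _ ≤ a.re := hare
    _ ≤ ‖a‖ := habsa
    _ = 1 * ‖a‖ := (one_mul _).symm
end

section
/- Let E11 ∈ ℝ^{r×r} be symmetric positive definite and S ∈ ℝ^{r×r} with symmetric part S̃ ≥ 0. Then for every k ≥ 0 the operator P := (E11 + k S)^{-1} E11 satisfies ‖P v‖_{E11} ≤ ‖v‖_{E11} for all v ∈ ℝ^r (P is a nonexpansive map in the E11-norm). -/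
open Matrix

/-- P = (E11 + k S)⁻¹ E11 is nonexpansive in the E11-norm for all k ≥ 0. -/
theorem resolvent_nonexpansive
    {r : ℕ} (E11 S : Matrix (Fin r) (Fin r) ℝ)
    (hE : E11.PosDef)
    (hS : (((1/2 : ℝ)) • (S + Sᵀ)).PosSemidef)
    (k : ℝ) (hk : 0 ≤ k) :
    ∀ v : Fin r → ℝ,
      (((E11 + k • S)⁻¹ * E11).mulVec v) ⬝ᵥ
          E11.mulVec (((E11 + k • S)⁻¹ * E11).mulVec v)
        ≤ v ⬝ᵥ E11.mulVec v := by
  intro v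
  set A := E11 + k • S with hA
  -- the quadratic form of S is nonnegative
  have hSquad : ∀ x : Fin r → ℝ, 0 ≤ x ⬝ᵥ S.mulVec x := by
    intro x
    have h2 := hS.dotProduct_mulVec_nonneg x
    have hsym : x ⬝ᵥ Sᵀ.mulVec x = x ⬝ᵥ S.mulVec x := by
      rw [dotProduct_mulVec, vecMul_transpose, dotProduct_comm]
    simp only [star_trivial, smul_mulVec, add_mulVec, dotProduct_smul,
      dotProduct_add, hsym, smul_eq_mul] at h2
    linarith
  -- A is invertible
  have hU : IsUnit A := by
    rw [← Matrix.mulVec_injective_iff_isUnit]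
    rw [show A.mulVec = A.mulVecLin from rfl, ← LinearMap.ker_eq_bot,
      LinearMap.ker_eq_bot']
    intro x hx
    by_contra hxne
    have hx' : x ⬝ᵥ A.mulVec x = 0 := by
      rw [show A.mulVecLin x = A.mulVec x from rfl] at hx
      rw [hx, dotProduct_zero]
    have hE0 := hE.dotProduct_mulVec_pos hxne
    simp only [star_trivial] at hE0
    have hS0 := hSquad x
    rw [hA, add_mulVec, smul_mulVec, dotProduct_add, dotProduct_smul,
      smul_eq_mul] at hx'
    nlinarith
  have hAinv : A * A⁻¹ = 1 := Matrix.mul_nonsing_inv A (A.isUnit_iff_isUnit_det.mp hU)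
  set w := ((A⁻¹ * E11).mulVec v) with hwdef
  have hw : A.mulVec w = E11.mulVec v := by
    rw [hwdef, mulVec_mulVec, ← Matrix.mul_assoc, hAinv, Matrix.one_mul]
  -- expand: E w + k S w = E v
  have hw' : E11.mulVec w + k • S.mulVec w = E11.mulVec v := by
    rw [← hw, hA, add_mulVec, smul_mulVec]
  -- E-symmetry
  have hEsym : ∀ x y : Fin r → ℝ, x ⬝ᵥ E11.mulVec y = y ⬝ᵥ E11.mulVec x := by
    intro x y
    have ht : E11ᵀ = E11 := by
      ext i j; simpa using congrFun (congrFun hE.1 i) j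
    rw [dotProduct_mulVec, dotProduct_comm, ← mulVec_transpose, ht]
  -- step 1: w ⬝ E w ≤ w ⬝ E v
  have h1 : w ⬝ᵥ E11.mulVec w ≤ w ⬝ᵥ E11.mulVec v := by
    have := congrArg (fun u => w ⬝ᵥ u) hw'
    simp only [dotProduct_add, dotProduct_smul, smul_eq_mul] at this
    have := hSquad w
    nlinarith
  -- step 2: 0 ≤ (v - w) ⬝ E (v - w)
  have h2 : 0 ≤ (v - w) ⬝ᵥ E11.mulVec (v - w) := by
    have := hE.posSemidef.dotProduct_mulVec_nonneg (v - w)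
    simpa using this
  rw [mulVec_sub, dotProduct_sub, sub_dotProduct, sub_dotProduct] at h2
  have hvw := hEsym v w
  linarith
end
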